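/- Let α and β be assemblies with dom α ∩ dom β ≠ ∅, and let (A, B) be any partition of dom α ∪ dom β into two nonempty parts. Then either both A ∩ dom α and B ∩ dom α are nonempty, or both A ∩ dom β and B ∩ dom β are nonempty; consequently, if α and β are consistent and both τ-stable, the interacting edges of α ∪ β crossing (A, B) have total strength at least τ. -/

import Mathlib

/-- A tile system over a type `T` of tile types: each tile type has, in each
direction (unit vector of `ℤ × ℤ`), a glue label (a natural number `ℕ`), and
each glue label has a nonnegative integer strength given by `str`. -/
structure TileSystem (T : Type) where
  glue : T → ℤ × ℤ → ℕ
  str : ℕ → ℕ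

/-- The four unit-vector directions of `ℤ²`. -/
def dirs : Finset (ℤ × ℤ) := {(0,1), (0,-1), (1,0), (-1,0)}

/-- An assembly: a partial function from `ℤ²` to tile types. -/
abbrev Assembly (T : Type) := ℤ × ℤ → Option T

/-- `D` is the domain of the assembly `α`. -/
def IsDom {T : Type} (α : Assembly T) (D : Finset (ℤ × ℤ)) : Prop :=
  ∀ p, (α p).isSome ↔ p ∈ D

/-- The strength of the bond between positions `p` and `q` in `α`: it is the
strength of the common glue if `q - p` is a unit direction and the glue of the
tile at `p` in direction `q - p` matches the glue of the tile at `q` in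
direction `p - q`; otherwise `0`. -/
def bond {T : Type} (ts : TileSystem T) (α : Assembly T) (p q : ℤ × ℤ) : ℕ :=
  match α p, α q with
  | some t, some t' =>
      if q - p ∈ dirs ∧ ts.glue t (q - p) = ts.glue t' (p - q)
      then ts.str (ts.glue t (q - p)) else 0
  | _, _ => 0

/-- Two positions of `α` interact if they hold tiles binding with positive strength. -/
def Interacts {T : Type} (ts : TileSystem T) (α : Assembly T) (p q : ℤ × ℤ) : Prop :=
  0 < bond ts α p q

/-- Total strength of the interacting glues between positions in `A` and
(adjacent) positions in `B`. -/
def strengthBetween {T : Type} (ts : TileSystem T) (α : Assembly T)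
    (A B : Finset (ℤ × ℤ)) : ℕ :=
  ∑ p ∈ A, ∑ q ∈ B, bond ts α p q

/-- `α` is `τ`-stable: every partition of its domain into two nonempty parts is
crossed by interacting glues of total strength at least `τ`. -/
def Stable {T : Type} (ts : TileSystem T) (α : Assembly T) (τ : ℕ) : Prop :=
  ∀ D A B : Finset (ℤ × ℤ), IsDom α D → A ∪ B = D → Disjoint A B →
    A.Nonempty → B.Nonempty → τ ≤ strengthBetween ts α A B

/-- The union of two assemblies (agreeing with `α` wherever `α` is defined). -/
def aunion {T : Type} (α β : Assembly T) : Assembly T :=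
  fun p => match α p with
    | some t => some t
    | none => β p

/-- Producibility in the hierarchical model at temperature `τ`: an assembly is
producible if it is a single tile, or the `τ`-stable union of two producible
assemblies with disjoint domains. -/
inductive Producible {T : Type} (ts : TileSystem T) (τ : ℕ) : Assembly T → Prop where
  | single (p : ℤ × ℤ) (t : T) :
      Producible ts τ (fun q => if q = p then some t else none)
  | union {α β : Assembly T} :
      Producible ts τ α → Producible ts τ β →
      (∀ p, α p = none ∨ β p = none) →
      Stable ts (aunion α β) τ →
      Producible ts τ (aunion α β)

/-- Two assemblies are consistent if they agree wherever both are defined. -/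
def Consistent {T : Type} (α β : Assembly T) : Prop :=
  ∀ p t t', α p = some t → β p = some t' → t = t'

/-- `α` is a subassembly of `β`. -/
def Subassembly {T : Type} (α β : Assembly T) : Prop :=
  ∀ p t, α p = some t → β p = some t

/-- A producible assembly is terminal if no producible assembly can stably attach to it. -/
def Terminal {T : Type} (ts : TileSystem T) (τ : ℕ) (α : Assembly T) : Prop :=
  ∀ β : Assembly T, Producible ts τ β → (∀ p, α p = none ∨ β p = none) →
    ¬ Stable ts (aunion α β) τ

/-- The hierarchical system uniquely produces `α` if the set of producible
terminal assemblies equals `{α}`. -/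
def UniquelyProduces {T : Type} (ts : TileSystem T) (τ : ℕ) (α : Assembly T) : Prop :=
  {γ : Assembly T | Producible ts τ γ ∧ Terminal ts τ γ} = {α}

/-- `𝒞` is a partition of the finite set `D`: pairwise disjoint nonempty parts
whose union is `D`. -/
def IsPartition (𝒞 : Finset (Finset (ℤ × ℤ))) (D : Finset (ℤ × ℤ)) : Prop :=
  (∀ C ∈ 𝒞, C.Nonempty) ∧
  (∀ C₁ ∈ 𝒞, ∀ C₂ ∈ 𝒞, C₁ ≠ C₂ → Disjoint C₁ C₂) ∧
  𝒞.sup id = D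

/-! A point common to both domains lies on one side of the cut, and any point on the other
side lies in one of the two domains, so the cut splits that domain. Stability of the
corresponding assembly bounds the bonds crossing that split, and by consistency these are
bonds of the union as well. -/

lemma Finset.nonempty_inter_split {ι : Type*} [DecidableEq ι] {D E A B : Finset ι}
    (hover : (D ∩ E).Nonempty) (hcover : A ∪ B = D ∪ E)
    (hA : A.Nonempty) (hB : B.Nonempty) :
    ((A ∩ D).Nonempty ∧ (B ∩ D).Nonempty) ∨ ((A ∩ E).Nonempty ∧ (B ∩ E).Nonempty) := by
  obtain ⟨x, hx⟩ := hover
  obtain ⟨hxD, hxE⟩ := Finset.mem_inter.mp hx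
  have mem_cover : ∀ {y}, y ∈ A ∪ B → y ∈ D ∨ y ∈ E := fun hy =>
    Finset.mem_union.mp (hcover ▸ hy)
  have hx : x ∈ A ∨ x ∈ B := Finset.mem_union.mp (hcover ▸ Finset.mem_union_left E hxD)
  rcases hx with hxA | hxB
  · obtain ⟨y, hy⟩ := hB
    rcases mem_cover (Finset.mem_union_right A hy) with hyD | hyE
    · exact .inl ⟨⟨x, Finset.mem_inter.mpr ⟨hxA, hxD⟩⟩, ⟨y, Finset.mem_inter.mpr ⟨hy, hyD⟩⟩⟩
    · exact .inr ⟨⟨x, Finset.mem_inter.mpr ⟨hxA, hxE⟩⟩, ⟨y, Finset.mem_inter.mpr ⟨hy, hyE⟩⟩⟩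
  · obtain ⟨y, hy⟩ := hA
    rcases mem_cover (Finset.mem_union_left B hy) with hyD | hyE
    · exact .inl ⟨⟨y, Finset.mem_inter.mpr ⟨hy, hyD⟩⟩, ⟨x, Finset.mem_inter.mpr ⟨hxB, hxD⟩⟩⟩
    · exact .inr ⟨⟨y, Finset.mem_inter.mpr ⟨hy, hyE⟩⟩, ⟨x, Finset.mem_inter.mpr ⟨hxB, hxE⟩⟩⟩

section Strength

variable {T : Type} (ts : TileSystem T)

lemma strengthBetween_mono (α : Assembly T) {A A' B B' : Finset (ℤ × ℤ)}
    (hA : A ⊆ A') (hB : B ⊆ B') :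
    strengthBetween ts α A B ≤ strengthBetween ts α A' B' :=
  calc ∑ p ∈ A, ∑ q ∈ B, bond ts α p q
      ≤ ∑ p ∈ A, ∑ q ∈ B', bond ts α p q :=
        Finset.sum_le_sum fun _ _ => Finset.sum_le_sum_of_subset hB
    _ ≤ ∑ p ∈ A', ∑ q ∈ B', bond ts α p q := Finset.sum_le_sum_of_subset hA

lemma strengthBetween_congr {γ δ : Assembly T} {A B : Finset (ℤ × ℤ)}
    (hA : ∀ p ∈ A, δ p = γ p) (hB : ∀ q ∈ B, δ q = γ q) :
    strengthBetween ts δ A B = strengthBetween ts γ A B :=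
  Finset.sum_congr rfl fun p hp => Finset.sum_congr rfl fun q hq => by
    simp only [bond, hA p hp, hB q hq]

lemma Stable.le_strengthBetween_of_agree {τ : ℕ} {γ δ : Assembly T} {D A B : Finset (ℤ × ℤ)}
    (hst : Stable ts γ τ) (hD : IsDom γ D) (hagree : ∀ p ∈ D, δ p = γ p)
    (hsub : D ⊆ A ∪ B) (hdisj : Disjoint A B)
    (hA : (A ∩ D).Nonempty) (hB : (B ∩ D).Nonempty) :
    τ ≤ strengthBetween ts δ A B := by
  have hsplit : A ∩ D ∪ B ∩ D = D := by
    rw [← Finset.union_inter_distrib_right, Finset.inter_eq_right.mpr hsub]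
  calc τ ≤ strengthBetween ts γ (A ∩ D) (B ∩ D) :=
        hst D _ _ hD hsplit (hdisj.mono Finset.inter_subset_left Finset.inter_subset_left) hA hB
    _ = strengthBetween ts δ (A ∩ D) (B ∩ D) :=
        (strengthBetween_congr ts (fun p hp => hagree p (Finset.mem_inter.mp hp).2)
          (fun q hq => hagree q (Finset.mem_inter.mp hq).2)).symm
    _ ≤ strengthBetween ts δ A B :=
        strengthBetween_mono ts δ Finset.inter_subset_left Finset.inter_subset_left

end Strength

lemma aunion_eq_left {T : Type} {α : Assembly T} (β : Assembly T) {p : ℤ × ℤ}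
    (hp : (α p).isSome) : aunion α β p = α p := by
  obtain ⟨t, ht⟩ := Option.isSome_iff_exists.mp hp
  simp only [aunion, ht]

lemma aunion_eq_right {T : Type} {α β : Assembly T} (hcons : Consistent α β) {p : ℤ × ℤ}
    (hp : (β p).isSome) : aunion α β p = β p := by
  obtain ⟨t', ht'⟩ := Option.isSome_iff_exists.mp hp
  cases hα : α p with
  | none => simp only [aunion, hα]
  | some t => simp only [aunion, hα, ht', hcons p t t' hα ht']

theorem union_cut_strength_general {T : Type} (ts : TileSystem T)
    (τ : ℕ) (α β : Assembly T)
    (Dα Dβ : Finset (ℤ × ℤ)) (hDα : IsDom α Dα) (hDβ : IsDom β Dβ)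
    (hover : (Dα ∩ Dβ).Nonempty)
    (A B : Finset (ℤ × ℤ)) (hcover : A ∪ B = Dα ∪ Dβ) (hdisj : Disjoint A B)
    (hA : A.Nonempty) (hB : B.Nonempty) :
    (((A ∩ Dα).Nonempty ∧ (B ∩ Dα).Nonempty) ∨
      ((A ∩ Dβ).Nonempty ∧ (B ∩ Dβ).Nonempty)) ∧
    (Consistent α β → Stable ts α τ → Stable ts β τ →
      τ ≤ strengthBetween ts (aunion α β) A B) := by
  have hsplit := Finset.nonempty_inter_split hover hcover hA hB
  refine ⟨hsplit, fun hcons hstα hstβ => ?_⟩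
  rcases hsplit with ⟨hAα, hBα⟩ | ⟨hAβ, hBβ⟩
  · exact hstα.le_strengthBetween_of_agree ts hDα
      (fun p hp => aunion_eq_left β ((hDα p).mpr hp))
      (hcover ▸ Finset.subset_union_left) hdisj hAα hBα
  · exact hstβ.le_strengthBetween_of_agree ts hDβ
      (fun p hp => aunion_eq_right hcons ((hDβ p).mpr hp))
      (hcover ▸ Finset.subset_union_right) hdisj hAβ hBβ

/-- Let `α`, `β` be assemblies with overlapping domains and
let `(A, B)` be any partition of `dom α ∪ dom β` into two nonempty parts.  Then
either both `A ∩ dom α` and `B ∩ dom α` are nonempty, or both `A ∩ dom β` and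
`B ∩ dom β` are nonempty; consequently, if `α` and `β` are consistent and both
`τ`-stable, the interacting edges of `α ∪ β` crossing `(A, B)` have total
strength at least `τ`. -/
theorem union_cut_strength {T : Type} [Fintype T] (ts : TileSystem T)
    (τ : ℕ) (hτ : 0 < τ) (α β : Assembly T)
    (Dα Dβ : Finset (ℤ × ℤ)) (hDα : IsDom α Dα) (hDβ : IsDom β Dβ)
    (hover : (Dα ∩ Dβ).Nonempty)
    (A B : Finset (ℤ × ℤ)) (hcover : A ∪ B = Dα ∪ Dβ) (hdisj : Disjoint A B)
    (hA : A.Nonempty) (hB : B.Nonempty) :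
    (((A ∩ Dα).Nonempty ∧ (B ∩ Dα).Nonempty) ∨
      ((A ∩ Dβ).Nonempty ∧ (B ∩ Dβ).Nonempty)) ∧
    (Consistent α β → Stable ts α τ → Stable ts β τ →
      τ ≤ strengthBetween ts (aunion α β) A B) :=
  union_cut_strength_general ts τ α β Dα Dβ hDα hDβ hover A B hcover hdisj hA hB
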